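/- arXiv:1909.00019 — 2 statements merged into one kernel-verified Lean document; each statement's English description precedes it below -/
import Mathlib

section
/- Let T be a tree (a connected acyclic simple graph) on n ≥ 2 vertices. Then T is word-representable, the minimal length of a word that word-represents T equals 2n − 2; that is, there exists a word of length 2n − 2 that word-represents T, and every word that word-represents T has length at least 2n − 2. -/
variable {V : Type*}

/-- The restriction of a word `w` to the letters `x` and `y`. -/
def restrictWord [DecidableEq V] (w : List V) (x y : V) : List V :=
  w.filter fun z => decide (z = x ∨ z = y)

/-- `x` and `y` alternate in `w`: the restriction of `w` to `{x, y}` has no two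
consecutive equal letters. -/
def Alternates [DecidableEq V] (w : List V) (x y : V) : Prop :=
  (restrictWord w x y).Chain' (· ≠ ·)

/-- `w` word-represents the simple graph `G`: every vertex occurs in `w`, and two distinct
vertices are adjacent iff they alternate in `w`. -/
def Represents [DecidableEq V] (G : SimpleGraph V) (w : List V) : Prop :=
  (∀ v : V, v ∈ w) ∧ ∀ x y : V, x ≠ y → (G.Adj x y ↔ Alternates w x y)

/-- `ℓ(G)`: the minimal length of a word-representant of `G`. -/
noncomputable def minRepLength [DecidableEq V] (G : SimpleGraph V) : ℕ :=
  sInf {n | ∃ w : List V, Represents G w ∧ w.length = n}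

/-! Lower bound: letters occurring exactly once in a representant pairwise alternate, so they form
a clique; in a triangle-free graph there are at most two of them, and every other letter occurs at
least twice. Upper bound: if `u` is a leaf of `T` with neighbour `v`, and `w₁ ++ v :: w₂`
represents `T - u` with every letter occurring at most twice, then `w₁ ++ u :: v :: u :: w₂`
represents `T`; the bound on occurrences makes `u` and `v` alternate, while the factor `u v u`
separates `u` from every other letter. -/

section Alternates

variable [DecidableEq V]

theorem alternates_iff {w : List V} {x y : V} :
    Alternates w x y ↔ (restrictWord w x y).IsChain (· ≠ ·) :=
  Iff.rfl

theorem alternates_comm {w : List V} {x y : V} : Alternates w x y ↔ Alternates w y x := by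
  simp only [Alternates, restrictWord, or_comm]

theorem alternates_of_count_eq_one {w : List V} {x y : V} (hx : w.count x = 1)
    (hy : w.count y = 1) : Alternates w x y := by
  refine List.Pairwise.isChain (List.nodup_iff_count_le_one.2 fun a => ?_)
  by_cases ha : a = x ∨ a = y
  · rw [restrictWord, List.count_filter (by simpa using ha)]
    rcases ha with rfl | rfl <;> omega
  · have : a ∉ restrictWord w x y := fun h =>
      ha (by simpa [restrictWord] using (List.mem_filter.1 h).2)
    simp [List.count_eq_zero_of_not_mem this]

theorem alternates_map {W : Type*} [DecidableEq W] {f : V → W} (hf : f.Injective)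
    (w : List V) (x y : V) : Alternates (w.map f) (f x) (f y) ↔ Alternates w x y := by
  have hrestrict : restrictWord (w.map f) (f x) (f y) = (restrictWord w x y).map f := by
    simp [restrictWord, List.filter_map, Function.comp_def, hf.eq_iff]
  rw [alternates_iff, alternates_iff, hrestrict, List.isChain_map]
  simp only [ne_eq, hf.eq_iff]

theorem alternates_insert_iff_of_ne {w₁ w₂ : List V} {u v x y : V} (hx : x ≠ u) (hy : y ≠ u) :
    Alternates (w₁ ++ u :: v :: u :: w₂) x y ↔ Alternates (w₁ ++ v :: w₂) x y := by
  simp [Alternates, restrictWord, List.filter_append, List.filter_cons, hx.symm, hy.symm]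

theorem alternates_insert_iff {w₁ w₂ : List V} {u v y : V}
    (hu : u ∉ w₁ ++ v :: w₂) (hv : (w₁ ++ v :: w₂).count v ≤ 2) :
    Alternates (w₁ ++ u :: v :: u :: w₂) u y ↔ y = v := by
  simp only [List.mem_append, List.mem_cons, not_or] at hu
  obtain ⟨hu₁, huv, hu₂⟩ := hu
  constructor
  · intro halt
    by_contra hyv
    have hsplit : restrictWord (w₁ ++ u :: v :: u :: w₂) u y =
        restrictWord w₁ u y ++ u :: u :: restrictWord w₂ u y := by
      simp [restrictWord, Ne.symm huv, Ne.symm hyv]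
    rw [alternates_iff, hsplit, List.isChain_append_cons_cons] at halt
    exact halt.2.1 rfl
  · rintro rfl
    have hreplicate : ∀ l : List V, u ∉ l → restrictWord l u y = List.replicate (l.count y) y :=
      fun l hl => by
        rw [← List.filter_eq]
        exact List.filter_congr fun z hz => by simp [show z ≠ u from fun h => hl (h ▸ hz)]
    have hsplit : restrictWord (w₁ ++ u :: y :: u :: w₂) u y =
        restrictWord w₁ u y ++ u :: y :: u :: restrictWord w₂ u y := by
      simp [restrictWord]
    simp only [List.count_append, List.count_cons_self] at hv
    rw [alternates_iff, hsplit, hreplicate w₁ hu₁, hreplicate w₂ hu₂]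
    rcases (by omega : w₁.count y = 0 ∧ w₂.count y = 0 ∨ w₁.count y = 1 ∧ w₂.count y = 0 ∨
        w₁.count y = 0 ∧ w₂.count y = 1) with ⟨h₁, h₂⟩ | ⟨h₁, h₂⟩ | ⟨h₁, h₂⟩ <;>
      simp [h₁, h₂, huv, Ne.symm huv]

end Alternates

section Represents

variable [DecidableEq V] {G : SimpleGraph V}

theorem Represents.two_mul_card_sub_two_le_length [Fintype V] (hG : G.CliqueFree 3)
    {w : List V} (hw : Represents G w) : 2 * Fintype.card V - 2 ≤ w.length := by
  set S := Finset.univ.filter fun v => w.count v = 1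
  have hclique : G.IsClique (S : Set V) := fun x hx y hy hxy =>
    (hw.2 x y hxy).2 (alternates_of_count_eq_one (by simpa [S] using hx) (by simpa [S] using hy))
  have hS : S.card ≤ 2 := by
    by_contra! h
    obtain ⟨t, hts, ht⟩ := Finset.exists_subset_card_eq h
    exact hG t ⟨hclique.subset (Finset.coe_subset.2 hts), ht⟩
  have hlen : ∑ v, w.count v = w.length := by
    simpa using Multiset.sum_count_eq_card (s := Finset.univ) (m := (w : Multiset V)) (by simp)
  have hcount : 2 * Fintype.card V ≤ w.length + S.card :=
    calc 2 * Fintype.card V = ∑ _v : V, 2 := by simp [mul_comm]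
      _ ≤ ∑ v, (w.count v + if v ∈ S then 1 else 0) := Finset.sum_le_sum fun v _ => by
        have := List.count_pos_iff.2 (hw.1 v)
        split_ifs with hv <;> simp [S] at hv <;> omega
      _ = w.length + S.card := by simp [Finset.sum_add_distrib, hlen]
  omega

theorem represents_pair {a b : V} (hab : G.Adj a b) (hV : ∀ x, x = a ∨ x = b) :
    Represents G [a, b] := by
  have hcount : ∀ x, [a, b].count x = 1 := fun x => by
    rcases hV x with rfl | rfl <;> simp [hab.ne, hab.ne']
  refine ⟨fun x => by rcases hV x with rfl | rfl <;> simp, fun x y hxy => ?_⟩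
  refine iff_of_true ?_ (alternates_of_count_eq_one (hcount x) (hcount y))
  rcases hV x with rfl | rfl <;> rcases hV y with rfl | rfl
  exacts [absurd rfl hxy, hab, hab.symm, absurd rfl hxy]

theorem Represents.insert_leaf {u v : V} (hleaf : ∀ y, G.Adj u y ↔ y = v)
    {w' : List ({u}ᶜ : Set V)} (hw' : Represents (G.induce {u}ᶜ) w') {w₁ w₂ : List V}
    (hsplit : w'.map Subtype.val = w₁ ++ v :: w₂) (hv : (w₁ ++ v :: w₂).count v ≤ 2) :
    Represents G (w₁ ++ u :: v :: u :: w₂) := by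
  have hmem : ∀ x, x ≠ u → x ∈ w₁ ++ v :: w₂ := fun x hx =>
    hsplit ▸ List.mem_map_of_mem (hw'.1 ⟨x, hx⟩)
  have hu : u ∉ w₁ ++ v :: w₂ := by simp [← hsplit]
  have hleaf_alt : ∀ y, y ≠ u → (G.Adj u y ↔ Alternates (w₁ ++ u :: v :: u :: w₂) u y) :=
    fun y hy => (hleaf y).trans (alternates_insert_iff hu hv).symm
  refine ⟨fun x => ?_, fun x y hxy => ?_⟩
  · by_cases hx : x = u
    · simp [hx]
    · have := hmem x hx
      simp only [List.mem_append, List.mem_cons] at this ⊢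
      tauto
  rcases eq_or_ne x u with rfl | hx
  · exact hleaf_alt y (Ne.symm hxy)
  rcases eq_or_ne y u with rfl | hy
  · rw [G.adj_comm, alternates_comm]
    exact hleaf_alt x hx
  calc G.Adj x y ↔ (G.induce {u}ᶜ).Adj ⟨x, hx⟩ ⟨y, hy⟩ := Iff.rfl
    _ ↔ Alternates w' ⟨x, hx⟩ ⟨y, hy⟩ := hw'.2 _ _ fun h => hxy (congrArg Subtype.val h)
    _ ↔ Alternates (w₁ ++ v :: w₂) x y := by
      rw [← hsplit, ← alternates_map Subtype.val_injective]
    _ ↔ _ := (alternates_insert_iff_of_ne hx hy).symm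

theorem Represents.exists_insert_leaf {u v : V}
    (hleaf : ∀ y, G.Adj u y ↔ y = v) {w' : List ({u}ᶜ : Set V)}
    (hw' : Represents (G.induce {u}ᶜ) w') (hcount : ∀ x, w'.count x ≤ 2) :
    ∃ w : List V, Represents G w ∧ w.length = w'.length + 2 ∧ ∀ x, w.count x ≤ 2 := by
  have hvu : v ≠ u := ((hleaf v).2 rfl).ne'
  have hcount_val : ∀ x, (w'.map Subtype.val).count x ≤ 2 := fun x => by
    by_cases hx : x = u
    · exact (List.count_eq_zero_of_not_mem (by simp [hx])).trans_le (Nat.zero_le _)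
    · exact (List.count_map_of_injective _ _ Subtype.val_injective ⟨x, hx⟩).trans_le (hcount _)
  obtain ⟨w₁, w₂, hsplit⟩ :=
    List.append_of_mem (List.mem_map_of_mem (f := Subtype.val) (hw'.1 ⟨v, hvu⟩))
  have hu : u ∉ w₁ ++ v :: w₂ := by simp [← hsplit]
  refine ⟨w₁ ++ u :: v :: u :: w₂, hw'.insert_leaf hleaf hsplit (hsplit ▸ hcount_val v), ?_,
    fun x => ?_⟩
  · simp [← List.length_map (f := Subtype.val), hsplit]
    omega
  · have hx := hsplit ▸ hcount_val x
    simp only [List.mem_append, List.mem_cons, not_or] at hu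
    obtain ⟨hu₁, huv, hu₂⟩ := hu
    by_cases hxu : x = u
    · subst hxu
      simp [List.count_eq_zero_of_not_mem hu₁, List.count_eq_zero_of_not_mem hu₂, Ne.symm huv]
    · simp [List.count_cons, Ne.symm hxu] at hx ⊢
      omega

end Represents

theorem SimpleGraph.IsTree.exists_represents [Fintype V] [DecidableEq V] [Nontrivial V]
    {T : SimpleGraph V} (hT : T.IsTree) :
    ∃ w : List V, Represents T w ∧ w.length = 2 * Fintype.card V - 2 ∧ ∀ x, w.count x ≤ 2 := by
  induction hn : Fintype.card V using Nat.strong_induction_on generalizing V with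
  | _ n ih =>
    subst hn
    classical
    obtain ⟨u, hu⟩ := hT.exists_vert_degree_one_of_nontrivial
    obtain ⟨v, huv, hv⟩ := SimpleGraph.degree_eq_one_iff_existsUnique_adj.1 hu
    have hleaf : ∀ y, T.Adj u y ↔ y = v := fun y => ⟨hv y, fun h => h ▸ huv⟩
    have hcard : Fintype.card ({u}ᶜ : Set V) = Fintype.card V - 1 := by
      rw [Fintype.card_compl_set, Set.card_singleton]
    have hcardV := Fintype.one_lt_card (α := V)
    rcases subsingleton_or_nontrivial ({u}ᶜ : Set V) with hsub | hnontriv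
    · have hV : ∀ x, x = u ∨ x = v := fun x => or_iff_not_imp_left.2 fun hx =>
        congrArg Subtype.val (Subsingleton.elim (⟨x, hx⟩ : ({u}ᶜ : Set V)) ⟨v, huv.ne'⟩)
      have hcard₂ : Fintype.card V ≤ 2 :=
        calc Fintype.card V ≤ ({u, v} : Finset V).card :=
              Finset.card_le_card fun x _ => by simpa using hV x
          _ ≤ 2 := Finset.card_le_two
      exact ⟨[u, v], represents_pair huv hV, by simp; omega,
        fun x => List.count_le_length.trans (by simp)⟩
    · have hcard' := Fintype.one_lt_card (α := ({u}ᶜ : Set V))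
      have hT' : (T.induce {u}ᶜ).IsTree :=
        ⟨hT.connected.induce_compl_singleton_of_degree_eq_one hu, hT.isAcyclic.induce _⟩
      obtain ⟨w', hw', hlen, hcount⟩ := ih _ (by omega) hT' rfl
      -- `hcount` counts with the `BEq` instance derived from `DecidableEq`, not `Subtype.instBEq`
      obtain ⟨w, hw, hlen', hcount_w⟩ := hw'.exists_insert_leaf hleaf fun x => by
        convert hcount x using 2; exact lawful_beq_subsingleton _ _
      exact ⟨w, hw, by omega, hcount_w⟩

/-- Let `T` be a tree on `n ≥ 2` vertices. Then `T` is word-representable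
and `ℓ(T) = 2n − 2`: there is a word-representant of length `2n − 2`, and every
word-representant has length at least `2n − 2`. -/
theorem tree_min_length [Fintype V] [DecidableEq V]
    (T : SimpleGraph V) (hT : T.IsTree) (n : ℕ) (hn : Fintype.card V = n) (h2 : 2 ≤ n) :
    (∃ w : List V, Represents T w ∧ w.length = 2 * n - 2) ∧
    (∀ w : List V, Represents T w → 2 * n - 2 ≤ w.length) := by
  subst hn
  have : Nontrivial V := Fintype.one_lt_card_iff_nontrivial.1 h2
  obtain ⟨w, hw, hlen, -⟩ := hT.exists_represents
  exact ⟨⟨w, hw, hlen⟩, fun w hw =>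
    hw.two_mul_card_sub_two_le_length (hT.isAcyclic.cliqueFree le_rfl)⟩
end

section
/- Let k ≥ 3 be an integer, and let t = a^k b (the word consisting of k copies of a letter a followed by one copy of a distinct letter b). Then every finite simple graph is t-representable. -/
variable {V : Type*}

/-- A pattern on two distinct letters `a`, `b` is encoded as a `List Bool`,
where `false` stands for `a` and `true` stands for `b`.  `patternWord t c d` is the word
obtained from the pattern `t` by the substitution `a ↦ c`, `b ↦ d`. -/
def patternWord {α : Type*} (t : List Bool) (c d : α) : List α :=
  t.map fun b => if b then d else c

/-- `u` contains the pattern `t`: some contiguous factor of `u` is isomorphic to `t`,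
i.e. is the image of `t` under an injective substitution of the two letters. -/
def ContainsPattern {α : Type*} (t : List Bool) (u : List α) : Prop :=
  ∃ c d : α, c ≠ d ∧ patternWord t c d <:+: u

/-- `w` `t`-represents the simple graph `G`: every vertex occurs in `w`, and two distinct
vertices `x`, `y` are adjacent iff the restriction of `w` to `{x, y}` avoids the pattern `t`. -/
def TRepresents [DecidableEq V] (t : List Bool) (G : SimpleGraph V) (w : List V) : Prop :=
  (∀ v : V, v ∈ w) ∧
  ∀ x y : V, x ≠ y → (G.Adj x y ↔ ¬ ContainsPattern t (restrictWord w x y))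

/-- `G` is `t`-representable if some word `t`-represents it. -/
def TRepresentable [DecidableEq V] (t : List Bool) (G : SimpleGraph V) : Prop :=
  ∃ w : List V, TRepresents t G w

/-!
Write `k = m + 1`. The word lists every vertex once and then, for each ordered non-adjacent pair
`(x, y)`, the block `y x (O x)ᵐ y`, where `O` lists the vertices other than `x` and `y`.
On a non-edge `{x, y}` its own block restricts to `y xᵏ y`, which contains `xᵏ y`. On an edge
every block restricts to an alternating word or to `y uᵐ y`: its runs are shorter than `k` and it
neither starts nor ends with a doubled letter. For `k ≥ 3` these properties survive
concatenation, so the restriction to an edge has no `k` equal letters in a row and avoids `aᵏ b`.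
-/

section ShortRuns

variable {α : Type*}

structure ShortRuns (k : ℕ) (u : List α) : Prop where
  two_le_length : 2 ≤ u.length
  not_pair_prefix : ∀ c, ¬ [c, c] <+: u
  not_pair_suffix : ∀ c, ¬ [c, c] <:+ u
  not_replicate_infix : ∀ c, ¬ List.replicate k c <:+: u

variable {k : ℕ}

lemma shortRuns_of_isChain_ne {u : List α} (hk : 2 ≤ k) (hu : 2 ≤ u.length)
    (h : u.IsChain (· ≠ ·)) : ShortRuns k u := by
  have hpair (c : α) : ¬ [c, c] <:+: u := fun hc => by simpa using h.infix hc
  refine ⟨hu, fun c hc => hpair c hc.isInfix, fun c hc => hpair c hc.isInfix,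
    fun c hc => hpair c (.trans ?_ hc)⟩
  exact List.infix_replicate_iff.2 ⟨hk, rfl⟩

lemma ShortRuns.append (hk : 3 ≤ k) {u v : List α} (hu : ShortRuns k u) (hv : ShortRuns k v) :
    ShortRuns k (u ++ v) := by
  have hu2 := hu.two_le_length
  refine ⟨by rw [List.length_append]; omega, fun c hc => ?_, fun c hc => ?_, fun c hc => ?_⟩
  · exact hu.not_pair_prefix c (List.prefix_of_prefix_length_le hc (List.prefix_append _ _) hu2)
  · exact hv.not_pair_suffix c
      (List.suffix_of_suffix_length_le hc (List.suffix_append _ _) hv.two_le_length)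
  rcases List.infix_append_iff.1 hc with hc | hc | ⟨s, t, hst, hs, ht⟩
  · exact hu.not_replicate_infix c hc
  · exact hv.not_replicate_infix c hc
  obtain ⟨hlen, hs', ht'⟩ := List.append_eq_replicate_iff.1 hst.symm
  -- a `k`-run straddling the seam has two equal letters on one side of it
  rcases le_or_gt 2 s.length with h2 | h2
  · refine hu.not_pair_suffix c (.trans ?_ hs)
    rw [hs']
    exact List.suffix_replicate_iff.2 ⟨h2, rfl⟩
  · refine hv.not_pair_prefix c (.trans ?_ ht)
    rw [ht']
    exact List.prefix_replicate_iff.2 ⟨by simp; omega, rfl⟩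

lemma ShortRuns.append_flatten (hk : 3 ≤ k) {u : List α} {L : List (List α)}
    (hu : ShortRuns k u) (hL : ∀ v ∈ L, ShortRuns k v) : ShortRuns k (u ++ L.flatten) := by
  induction L generalizing u with
  | nil => simpa using hu
  | cons v L ih =>
    rw [List.flatten_cons, ← List.append_assoc]
    exact ih (hu.append hk (hL v (by simp))) fun w hw => hL w (by simp [hw])

lemma ShortRuns.flatten_replicate (hk : 3 ≤ k) {u : List α} (hu : ShortRuns k u) {m : ℕ}
    (hm : m ≠ 0) : ShortRuns k (List.replicate m u).flatten := by
  obtain ⟨n, rfl⟩ := Nat.exists_eq_succ_of_ne_zero hm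
  exact hu.append_flatten hk fun v hv => List.eq_of_mem_replicate hv ▸ hu

lemma ShortRuns.not_containsPattern {u : List α} (hu : ShortRuns k u) :
    ¬ ContainsPattern (List.replicate k false ++ [true]) u := by
  rintro ⟨c, d, -, h⟩
  simp only [patternWord, List.map_append, List.map_replicate, List.map_cons, List.map_nil]
    at h
  exact hu.not_replicate_infix c ((List.prefix_append _ _).isInfix.trans h)

lemma shortRuns_cons_replicate_append_singleton {m : ℕ} (hm : 2 ≤ m) {a b : α} (hab : a ≠ b) :
    ShortRuns (m + 1) (a :: (List.replicate m b ++ [a])) := by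
  classical
  have hprefix (c : α) : ¬ [c, c] <+: a :: (List.replicate m b ++ [a]) := fun hc => by
    obtain ⟨n, rfl⟩ : ∃ n, m = n + 1 := ⟨m - 1, by omega⟩
    simp only [List.replicate_succ, List.cons_append, List.cons_prefix_cons, List.nil_prefix,
      and_true] at hc
    exact hab (hc.1.symm.trans hc.2)
  refine ⟨by simp, hprefix, fun c hc => hprefix c ?_, fun c hc => ?_⟩
  · simpa using List.reverse_prefix.2 hc
  · -- `a` occurs twice and `b` occurs `m` times, too few for a run of `m + 1`
    have hcount := List.replicate_sublist_iff.1 hc.sublist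
    simp only [List.count_cons, List.count_append, List.count_replicate, List.count_nil,
      beq_iff_eq] at hcount
    split_ifs at hcount <;> grind

lemma isChain_ne_cons_flatten_replicate {a b : α} (hab : a ≠ b) (m : ℕ) :
    (a :: (List.replicate m [b, a]).flatten).IsChain (· ≠ ·) := by
  induction m with
  | zero => simp
  | succ m ih => simpa [List.replicate_succ, hab, Ne.symm hab] using ih

end ShortRuns

section Gadget

variable {V : Type*} [DecidableEq V]

lemma mem_restrictWord {w : List V} {x y z : V} :
    z ∈ restrictWord w x y ↔ z ∈ w ∧ (z = x ∨ z = y) := by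
  simp [restrictWord]

lemma restrictWord_comm (w : List V) (x y : V) : restrictWord w x y = restrictWord w y x :=
  List.filter_congr fun _ _ => decide_eq_decide.2 or_comm

lemma restrictWord_append (u v : List V) (x y : V) :
    restrictWord (u ++ v) x y = restrictWord u x y ++ restrictWord v x y :=
  List.filter_append ..

lemma restrictWord_flatten (L : List (List V)) (x y : V) :
    restrictWord L.flatten x y = (L.map (restrictWord · x y)).flatten :=
  List.filter_flatten ..

lemma restrictWord_eq_pair {l : List V} (hl : l.Nodup) {x y : V} (hx : x ∈ l) (hy : y ∈ l)
    (hxy : x ≠ y) : restrictWord l x y = [x, y] ∨ restrictWord l x y = [y, x] := by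
  refine List.perm_pair.1 <| (List.perm_ext_iff_of_nodup (hl.filter _) (by simp [hxy])).2 ?_
  intro z
  by_cases hz : z = x ∨ z = y
  · rcases hz with rfl | rfl <;> simp [hx, hy]
  · simp [hz]

def gadget (l : List V) (m : ℕ) (x y : V) : List V :=
  [y, x] ++ (List.replicate m (l.filter (fun z => z ≠ x ∧ z ≠ y) ++ [x])).flatten ++ [y]

lemma restrictWord_gadget (l : List V) (m : ℕ) (x y u v : V) :
    restrictWord (gadget l m x y) u v =
      restrictWord [y, x] u v ++
        (List.replicate m ((restrictWord l u v).filter (fun z => z ≠ x ∧ z ≠ y) ++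
          restrictWord [x] u v)).flatten ++ restrictWord [y] u v := by
  simp only [gadget, restrictWord_append, restrictWord_flatten, List.map_replicate]
  congr 4
  simp only [restrictWord, List.filter_filter, Bool.and_comm]

lemma restrictWord_gadget_self (l : List V) (m : ℕ) {x y : V} (hxy : x ≠ y) :
    restrictWord (gadget l m x y) x y = y :: (List.replicate (m + 1) x ++ [y]) := by
  have hnil : (restrictWord l x y).filter (fun z => z ≠ x ∧ z ≠ y) = [] :=
    List.filter_eq_nil_iff.2 fun z hz => by
      rcases (mem_restrictWord.1 hz).2 with rfl | rfl <;> simp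
  rw [restrictWord_gadget, hnil]
  simp [restrictWord, hxy, Ne.symm hxy, List.replicate_succ]

variable {l : List V} {m : ℕ} {x y : V}

lemma shortRuns_restrictWord {k : ℕ} (hk : 2 ≤ k) (hl : l.Nodup) {u v : V} (hu : u ∈ l)
    (hv : v ∈ l) (huv : u ≠ v) : ShortRuns k (restrictWord l u v) := by
  rcases restrictWord_eq_pair hl hu hv huv with h | h <;> rw [h] <;>
    exact shortRuns_of_isChain_ne hk (by simp) (by simp [huv, huv.symm])

lemma restrictWord_gadget_of_ne {u v : V} (hux : u ≠ x) (huy : u ≠ y) (hvx : v ≠ x)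
    (hvy : v ≠ y) :
    restrictWord (gadget l m x y) u v = (List.replicate m (restrictWord l u v)).flatten := by
  have hR : (restrictWord l u v).filter (fun z => z ≠ x ∧ z ≠ y) = restrictWord l u v :=
    List.filter_eq_self.2 fun z hz => by
      rcases (mem_restrictWord.1 hz).2 with rfl | rfl <;> simp [*]
  rw [restrictWord_gadget, hR]
  simp [restrictWord, hux.symm, huy.symm, hvx.symm, hvy.symm]

lemma restrictWord_gadget_left (hl : l.Nodup) (hx : x ∈ l) {v : V} (hv : v ∈ l) (hxy : x ≠ y)
    (hvx : v ≠ x) (hvy : v ≠ y) :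
    restrictWord (gadget l m x y) x v = x :: (List.replicate m [v, x]).flatten := by
  rcases restrictWord_eq_pair hl hx hv hvx.symm with h | h <;> rw [restrictWord_gadget, h] <;>
    simp [restrictWord, hxy.symm, hvx, hvy, hvx.symm, hvy.symm]

lemma restrictWord_gadget_right (hl : l.Nodup) (hy : y ∈ l) {v : V} (hv : v ∈ l) (hxy : x ≠ y)
    (hvx : v ≠ x) (hvy : v ≠ y) :
    restrictWord (gadget l m x y) y v = y :: (List.replicate m v ++ [y]) := by
  rcases restrictWord_eq_pair hl hy hv hvy.symm with h | h <;> rw [restrictWord_gadget, h] <;>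
    simp [restrictWord, hxy, hvx, hvy, hvx.symm, hvy.symm]

lemma shortRuns_restrictWord_gadget (hl : l.Nodup) (hm : 2 ≤ m) (hxy : x ≠ y) {u v : V}
    (hu : u ∈ l) (hv : v ∈ l) (huv : u ≠ v) (hvx : v ≠ x) (hvy : v ≠ y) :
    ShortRuns (m + 1) (restrictWord (gadget l m x y) u v) := by
  rcases eq_or_ne u x with rfl | hux
  · rw [restrictWord_gadget_left hl hu hv hxy hvx hvy]
    exact shortRuns_of_isChain_ne (by omega) (by simp; omega)
      (isChain_ne_cons_flatten_replicate huv m)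
  rcases eq_or_ne u y with rfl | huy
  · rw [restrictWord_gadget_right hl hu hv hxy hvx hvy]
    exact shortRuns_cons_replicate_append_singleton hm huv
  rw [restrictWord_gadget_of_ne hux huy hvx hvy]
  exact (shortRuns_restrictWord (by omega) hl hu hv huv).flatten_replicate (by omega) (by omega)

lemma shortRuns_restrictWord_gadget_of_sym2_ne (hl : l.Nodup) (hm : 2 ≤ m) (hxy : x ≠ y)
    {u v : V} (hu : u ∈ l) (hv : v ∈ l) (huv : u ≠ v)
    (hne : s(u, v) ≠ s(x, y)) : ShortRuns (m + 1) (restrictWord (gadget l m x y) u v) := by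
  wlog hvxy : v ≠ x ∧ v ≠ y generalizing u v
  · rw [restrictWord_comm]
    refine this hv hu huv.symm (by rwa [Sym2.eq_swap]) ?_
    simp only [ne_eq, Sym2.eq_iff] at hne hvxy
    grind
  exact shortRuns_restrictWord_gadget hl hm hxy hu hv huv hvxy.1 hvxy.2

end Gadget

section Representation

variable {V : Type*} [Fintype V] [DecidableEq V]

noncomputable def representingWord (G : SimpleGraph V) [DecidableRel G.Adj] (m : ℕ) : List V :=
  Finset.univ.toList ++ ((Finset.univ.filter fun p : V × V => Gᶜ.Adj p.1 p.2).toList.map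
    fun p => gadget Finset.univ.toList m p.1 p.2).flatten

variable (G : SimpleGraph V) [DecidableRel G.Adj] {m : ℕ}

lemma restrictWord_representingWord (u v : V) :
    restrictWord (representingWord G m) u v =
      restrictWord Finset.univ.toList u v ++
        ((Finset.univ.filter fun p : V × V => Gᶜ.Adj p.1 p.2).toList.map
          fun p => restrictWord (gadget Finset.univ.toList m p.1 p.2) u v).flatten := by
  rw [representingWord, restrictWord_append, restrictWord_flatten, List.map_map]
  rfl

lemma shortRuns_restrictWord_representingWord (hm : 2 ≤ m) {u v : V} (huv : G.Adj u v) :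
    ShortRuns (m + 1) (restrictWord (representingWord G m) u v) := by
  rw [restrictWord_representingWord]
  refine (shortRuns_restrictWord (by omega) (Finset.nodup_toList _) (by simp) (by simp)
    huv.ne).append_flatten (by omega) ?_
  simp only [List.mem_map, Finset.mem_toList, Finset.mem_filter, Finset.mem_univ, true_and]
  rintro _ ⟨⟨x, y⟩, hxy, rfl⟩
  refine shortRuns_restrictWord_gadget_of_sym2_ne (Finset.nodup_toList _) hm hxy.ne (by simp)
    (by simp) huv.ne ?_
  intro h
  exact hxy.2 ((G.adj_congr_of_sym2 h).1 huv)

lemma containsPattern_restrictWord_representingWord {u v : V} (huv : Gᶜ.Adj u v) :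
    ContainsPattern (List.replicate (m + 1) false ++ [true])
      (restrictWord (representingWord G m) u v) := by
  refine ⟨u, v, huv.ne, ?_⟩
  have hgadget : restrictWord (gadget Finset.univ.toList m u v) u v <:+:
      restrictWord (representingWord G m) u v := by
    rw [restrictWord_representingWord]
    refine .trans (List.infix_of_mem_flatten ?_) (List.infix_append_right)
    exact List.mem_map.2 ⟨(u, v), by simpa using huv, rfl⟩
  rw [restrictWord_gadget_self _ _ huv.ne] at hgadget
  refine .trans ?_ hgadget
  simpa [patternWord] using List.infix_cons (List.infix_refl _)

lemma tRepresents_representingWord (hm : 2 ≤ m) :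
    TRepresents (List.replicate (m + 1) false ++ [true]) G (representingWord G m) := by
  refine ⟨fun v => List.mem_append_left _ (by simp), fun u v huv => ⟨fun h =>
    (shortRuns_restrictWord_representingWord G hm h).not_containsPattern, fun h => ?_⟩⟩
  by_contra hadj
  exact h (containsPattern_restrictWord_representingWord G ⟨huv, hadj⟩)

end Representation

/-- For an integer `k ≥ 3` and the pattern `t = aᵏ b`,
every finite simple graph is `t`-representable. -/
theorem all_graphs_akb_representable (k : ℕ) (hk : 3 ≤ k)
    {V : Type*} [Fintype V] [DecidableEq V] (G : SimpleGraph V) :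
    TRepresentable (List.replicate k false ++ [true]) G := by
  classical
  obtain ⟨m, rfl⟩ : ∃ m, k = m + 1 := ⟨k - 1, by omega⟩
  exact ⟨_, tRepresents_representingWord G (by omega)⟩
end
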